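/- arXiv:1609.03597 — 4 statements merged into one kernel-verified Lean document; each statement's English description precedes it below -/
import Mathlib

section
/- Let Γ be a finite connected graph. If e, f, g are edges of Γ such that removing e and f together disconnects Γ, and removing f and g together disconnects Γ, then removing e and g together disconnects Γ. -/
open SimpleGraph

private lemma walk_delete_split {V : Type} {G : SimpleGraph V} (a b : V) :
    ∀ {v w : V}, G.Walk v w →
      (G.deleteEdges {s(a,b)}).Reachable v w ∨
      ((G.deleteEdges {s(a,b)}).Reachable v a ∧ (G.deleteEdges {s(a,b)}).Reachable b w) ∨
      ((G.deleteEdges {s(a,b)}).Reachable v b ∧ (G.deleteEdges {s(a,b)}).Reachable a w) := by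
  intro v w p
  induction p with
  | nil => exact Or.inl (Reachable.refl _)
  | @cons u x w h p ih =>
    by_cases hx : s(u, x) = s(a, b)
    · rcases Sym2.eq_iff.mp hx with ⟨rfl, rfl⟩ | ⟨rfl, rfl⟩
      · rcases ih with h1 | ⟨h1, h2⟩ | ⟨h1, h2⟩
        · exact Or.inr (Or.inl ⟨Reachable.refl _, h1⟩)
        · exact Or.inr (Or.inl ⟨Reachable.refl _, h2⟩)
        · exact Or.inl h2
      · rcases ih with h1 | ⟨h1, h2⟩ | ⟨h1, h2⟩
        · exact Or.inr (Or.inr ⟨Reachable.refl _, h1⟩)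
        · exact Or.inl h2
        · exact Or.inr (Or.inr ⟨Reachable.refl _, h2⟩)
    · have hadj : (G.deleteEdges {s(a,b)}).Adj u x := by
        rw [SimpleGraph.deleteEdges_adj]
        exact ⟨h, by simpa using hx⟩
      rcases ih with h1 | ⟨h1, h2⟩ | ⟨h1, h2⟩
      · exact Or.inl (hadj.reachable.trans h1)
      · exact Or.inr (Or.inl ⟨hadj.reachable.trans h1, h2⟩)
      · exact Or.inr (Or.inr ⟨hadj.reachable.trans h1, h2⟩)

private lemma walk_closed {V : Type} {G : SimpleGraph V} {S : V → Prop}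
    (hS : ∀ a b, G.Adj a b → S a → S b) :
    ∀ {x y : V}, G.Walk x y → S x → S y := by
  intro x y p
  induction p with
  | nil => exact id
  | cons h _ ih => exact fun hx => ih (hS _ _ h hx)

private lemma not_connected_of_cut {V : Type} {G : SimpleGraph V} {S : V → Prop}
    (hS : ∀ a b, G.Adj a b → S a → S b) {x y : V} (hx : S x) (hy : ¬ S y) :
    ¬ G.Connected := fun h => hy (walk_closed hS (h.preconnected x y).some hx)

private lemma twocut {V : Type} (Γ : SimpleGraph V)
    (e1 e2 f1 f2 : V)
    (hce : (Γ.deleteEdges {s(e1,e2)}).Connected)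
    (hcf : (Γ.deleteEdges {s(f1,f2)}).Connected)
    (h1 : ¬ (Γ.deleteEdges {s(e1,e2), s(f1,f2)}).Connected) :
    ¬ (Γ.deleteEdges {s(e1,e2), s(f1,f2)}).Reachable f1 f2 ∧
    (∀ v, (Γ.deleteEdges {s(e1,e2), s(f1,f2)}).Reachable f1 v ∨
          (Γ.deleteEdges {s(e1,e2), s(f1,f2)}).Reachable f2 v) ∧
    ∃ a b : V, s(e1,e2) = s(a,b) ∧
      (Γ.deleteEdges {s(e1,e2), s(f1,f2)}).Reachable f1 a ∧
      (Γ.deleteEdges {s(e1,e2), s(f1,f2)}).Reachable f2 b := by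
  have hkey : (Γ.deleteEdges {s(e1,e2)}).deleteEdges {s(f1,f2)} =
      Γ.deleteEdges {s(e1,e2), s(f1,f2)} := by
    rw [deleteEdges_deleteEdges, Set.singleton_union]
  have hkey2 : (Γ.deleteEdges {s(f1,f2)}).deleteEdges {s(e1,e2)} =
      Γ.deleteEdges {s(e1,e2), s(f1,f2)} := by
    rw [deleteEdges_deleteEdges, Set.singleton_union, Set.pair_comm]
  have htot : ∀ v, (Γ.deleteEdges {s(e1,e2), s(f1,f2)}).Reachable f1 v ∨
      (Γ.deleteEdges {s(e1,e2), s(f1,f2)}).Reachable f2 v := by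
    intro v
    obtain ⟨p⟩ := hce.preconnected f1 v
    have hs := walk_delete_split f1 f2 p
    rw [hkey] at hs
    rcases hs with h | ⟨_, hb⟩ | ⟨_, hb⟩
    · exact Or.inl h
    · exact Or.inr hb
    · exact Or.inl hb
  have hsep : ¬ (Γ.deleteEdges {s(e1,e2), s(f1,f2)}).Reachable f1 f2 := by
    intro hr
    apply h1
    rw [connected_iff_exists_forall_reachable]
    exact ⟨f1, fun w => (htot w).elim id fun h => hr.trans h⟩
  have hne12 : ¬ (Γ.deleteEdges {s(e1,e2), s(f1,f2)}).Reachable e1 e2 := by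
    intro hr
    apply hsep
    obtain ⟨p⟩ := hcf.preconnected f1 f2
    have hs := walk_delete_split e1 e2 p
    rw [hkey2] at hs
    rcases hs with h | ⟨ha, hb⟩ | ⟨ha, hb⟩
    · exact h
    · exact ha.trans (hr.trans hb)
    · exact ha.trans (hr.symm.trans hb)
  refine ⟨hsep, htot, ?_⟩
  rcases htot e1 with h1e | h1e <;> rcases htot e2 with h2e | h2e
  · exact absurd (h1e.symm.trans h2e) hne12
  · exact ⟨e1, e2, rfl, h1e, h2e⟩
  · exact ⟨e2, e1, Sym2.eq_swap, h2e, h1e⟩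
  · exact absurd (h1e.symm.trans h2e) hne12
/-- In a finite connected graph with no separating (bridge) edge,
pairwise separation of edges is transitive: if deleting `{e, f}` disconnects the
graph and deleting `{f, g}` disconnects the graph, then deleting `{e, g}`
disconnects the graph. -/
theorem pairwise_separation_transitive {V : Type} [Fintype V] (Γ : SimpleGraph V)
    (hconn : Γ.Connected)
    (hbridge : ∀ e ∈ Γ.edgeSet, (Γ.deleteEdges {e}).Connected)
    (e f g : Sym2 V) (he : e ∈ Γ.edgeSet) (hf : f ∈ Γ.edgeSet) (hg : g ∈ Γ.edgeSet)
    (hef : e ≠ f) (hfg : f ≠ g) (heg : e ≠ g)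
    (h1 : ¬ (Γ.deleteEdges {e, f}).Connected)
    (h2 : ¬ (Γ.deleteEdges {f, g}).Connected) :
    ¬ (Γ.deleteEdges {e, g}).Connected := by
  induction e using Sym2.ind with | _ e1 e2 => ?_
  induction f using Sym2.ind with | _ f1 f2 => ?_
  induction g using Sym2.ind with | _ g1 g2 => ?_
  have hce : (Γ.deleteEdges {s(e1,e2)}).Connected := hbridge _ he
  have hcf : (Γ.deleteEdges {s(f1,f2)}).Connected := hbridge _ hf
  have hcg : (Γ.deleteEdges {s(g1,g2)}).Connected := hbridge _ hg
  rw [SimpleGraph.mem_edgeSet] at he hf hg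
  obtain ⟨hsepEF, htotEF, a, b, hab, hfa, hfb⟩ := twocut Γ e1 e2 f1 f2 hce hcf h1
  have h2' : ¬ (Γ.deleteEdges {s(g1,g2), s(f1,f2)}).Connected := by
    rw [Set.pair_comm]; exact h2
  obtain ⟨hsepGF, htotGF, c, d, hcd, hfc, hfd⟩ := twocut Γ g1 g2 f1 f2 hcg hcf h2'
  -- notation
  set A : V → Prop := fun v => (Γ.deleteEdges {s(e1,e2), s(f1,f2)}).Reachable f1 v with hA
  set B : V → Prop := fun v => (Γ.deleteEdges {s(e1,e2), s(f1,f2)}).Reachable f2 v with hB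
  set C : V → Prop := fun v => (Γ.deleteEdges {s(g1,g2), s(f1,f2)}).Reachable f1 v with hC
  set D : V → Prop := fun v => (Γ.deleteEdges {s(g1,g2), s(f1,f2)}).Reachable f2 v with hD
  have hABd : ∀ v, A v → B v → False := fun v ha hb => hsepEF (ha.trans hb.symm)
  have hCDd : ∀ v, C v → D v → False := fun v hc hd => hsepGF (hc.trans hd.symm)
  have hAf1 : A f1 := Reachable.refl f1
  have hBf2 : B f2 := Reachable.refl f2
  have hCf1 : C f1 := Reachable.refl f1
  have hDf2 : D f2 := Reachable.refl f2
  -- the e-edge and g-edge as adjacencies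
  have heab : Γ.Adj a b := by
    rw [← SimpleGraph.mem_edgeSet, ← hab, SimpleGraph.mem_edgeSet]; exact he
  have hgcd : Γ.Adj c d := by
    rw [← SimpleGraph.mem_edgeSet, ← hcd, SimpleGraph.mem_edgeSet]; exact hg
  -- transfer lemmas
  have hmA : ∀ u w, Γ.Adj u w → s(u,w) ≠ s(e1,e2) → s(u,w) ≠ s(f1,f2) → A u → A w := by
    intro u w h hne hnf hu
    refine hu.trans (Adj.reachable ?_)
    rw [SimpleGraph.deleteEdges_adj]
    exact ⟨h, by simp [hne, hnf]⟩
  have hmB : ∀ u w, Γ.Adj u w → s(u,w) ≠ s(e1,e2) → s(u,w) ≠ s(f1,f2) → B u → B w := by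
    intro u w h hne hnf hu
    refine hu.trans (Adj.reachable ?_)
    rw [SimpleGraph.deleteEdges_adj]
    exact ⟨h, by simp [hne, hnf]⟩
  have hmC : ∀ u w, Γ.Adj u w → s(u,w) ≠ s(g1,g2) → s(u,w) ≠ s(f1,f2) → C u → C w := by
    intro u w h hng hnf hu
    refine hu.trans (Adj.reachable ?_)
    rw [SimpleGraph.deleteEdges_adj]
    exact ⟨h, by simp [hng, hnf]⟩
  have hmD : ∀ u w, Γ.Adj u w → s(u,w) ≠ s(g1,g2) → s(u,w) ≠ s(f1,f2) → D u → D w := by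
    intro u w h hng hnf hu
    refine hu.trans (Adj.reachable ?_)
    rw [SimpleGraph.deleteEdges_adj]
    exact ⟨h, by simp [hng, hnf]⟩
  -- the key inequalities for the edges e = s(a,b) and g = s(c,d)
  have habf : s(a,b) ≠ s(f1,f2) := hab ▸ hef
  have habg : s(a,b) ≠ s(g1,g2) := hab ▸ heg
  have hcdf : s(c,d) ≠ s(f1,f2) := hcd ▸ (Ne.symm hfg)
  have hcde : s(c,d) ≠ s(e1,e2) := hcd ▸ (Ne.symm heg)
  -- case split on which side of each partition the other edge lies
  rcases htotGF a with hCa | hDa <;> rcases htotEF c with hAc | hBc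
  · -- Case 1: e ⊆ C and g ⊆ A : then g would be a bridge, contradiction
    exfalso
    have hCb : C b := hmC a b heab habg habf hCa
    have hAd : A d := hmA c d hgcd hcde hcdf hAc
    have hclosed : ∀ u w, (Γ.deleteEdges {s(g1,g2)}).Adj u w → (A u ∧ D u) → (A w ∧ D w) := by
      intro u w huw hu
      rw [SimpleGraph.deleteEdges_adj] at huw
      obtain ⟨hadj, hng⟩ := huw
      rw [Set.mem_singleton_iff] at hng
      by_cases hue : s(u,w) = s(e1,e2)
      · rcases Sym2.eq_iff.mp (hue.trans hab) with ⟨rfl, rfl⟩ | ⟨rfl, rfl⟩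
        · exact absurd hu.2 (fun h => hCDd _ hCa h)
        · exact absurd hu.2 (fun h => hCDd _ hCb h)
      by_cases huf : s(u,w) = s(f1,f2)
      · rcases Sym2.eq_iff.mp huf with ⟨rfl, rfl⟩ | ⟨rfl, rfl⟩
        · exact absurd hu.2 (fun h => hCDd _ hCf1 h)
        · exact absurd hu.1 (fun h => hABd _ h hBf2)
      · exact ⟨hmA u w hadj hue huf hu.1, hmD u w hadj hng huf hu.2⟩
    exact not_connected_of_cut hclosed (x := d) (y := f1) ⟨hAd, hfd⟩
      (fun h => hCDd f1 hCf1 h.2) hcg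
  · -- Case 2: e ⊆ C and g ⊆ B : cut is B ∩ C
    have hCb : C b := hmC a b heab habg habf hCa
    have hBd : B d := hmB c d hgcd hcde hcdf hBc
    have hclosed : ∀ u w, (Γ.deleteEdges {s(e1,e2), s(g1,g2)}).Adj u w →
        (B u ∧ C u) → (B w ∧ C w) := by
      intro u w huw hu
      rw [SimpleGraph.deleteEdges_adj] at huw
      obtain ⟨hadj, hn⟩ := huw
      rw [Set.mem_insert_iff, Set.mem_singleton_iff] at hn
      push_neg at hn
      by_cases huf : s(u,w) = s(f1,f2)
      · rcases Sym2.eq_iff.mp huf with ⟨rfl, rfl⟩ | ⟨rfl, rfl⟩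
        · exact absurd hu.1 (fun h => hABd _ hAf1 h)
        · exact absurd hu.2 (fun h => hCDd _ h hDf2)
      · exact ⟨hmB u w hadj hn.1 huf hu.1, hmC u w hadj hn.2 huf hu.2⟩
    exact not_connected_of_cut hclosed (x := b) (y := f1) ⟨hfb, hCb⟩
      (fun h => hABd f1 hAf1 h.1)
  · -- Case 3: e ⊆ D and g ⊆ A : cut is A ∩ D
    have hDb : D b := hmD a b heab habg habf hDa
    have hAd : A d := hmA c d hgcd hcde hcdf hAc
    have hclosed : ∀ u w, (Γ.deleteEdges {s(e1,e2), s(g1,g2)}).Adj u w →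
        (A u ∧ D u) → (A w ∧ D w) := by
      intro u w huw hu
      rw [SimpleGraph.deleteEdges_adj] at huw
      obtain ⟨hadj, hn⟩ := huw
      rw [Set.mem_insert_iff, Set.mem_singleton_iff] at hn
      push_neg at hn
      by_cases huf : s(u,w) = s(f1,f2)
      · rcases Sym2.eq_iff.mp huf with ⟨rfl, rfl⟩ | ⟨rfl, rfl⟩
        · exact absurd hu.2 (fun h => hCDd _ hCf1 h)
        · exact absurd hu.1 (fun h => hABd _ h hBf2)
      · exact ⟨hmA u w hadj hn.1 huf hu.1, hmD u w hadj hn.2 huf hu.2⟩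
    exact not_connected_of_cut hclosed (x := a) (y := f1) ⟨hfa, hDa⟩
      (fun h => hCDd f1 hCf1 h.2)
  · -- Case 4: e ⊆ D and g ⊆ B : then f would be a bridge, contradiction
    exfalso
    have hDb : D b := hmD a b heab habg habf hDa
    have hBd : B d := hmB c d hgcd hcde hcdf hBc
    have hclosed : ∀ u w, (Γ.deleteEdges {s(f1,f2)}).Adj u w → (A u ∧ C u) → (A w ∧ C w) := by
      intro u w huw hu
      rw [SimpleGraph.deleteEdges_adj] at huw
      obtain ⟨hadj, hnf⟩ := huw
      rw [Set.mem_singleton_iff] at hnf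
      by_cases hue : s(u,w) = s(e1,e2)
      · rcases Sym2.eq_iff.mp (hue.trans hab) with ⟨rfl, rfl⟩ | ⟨rfl, rfl⟩
        · exact absurd hu.2 (fun h => hCDd _ h hDa)
        · exact absurd hu.2 (fun h => hCDd _ h hDb)
      by_cases hug : s(u,w) = s(g1,g2)
      · rcases Sym2.eq_iff.mp (hug.trans hcd) with ⟨rfl, rfl⟩ | ⟨rfl, rfl⟩
        · exact absurd hu.1 (fun h => hABd _ h hBc)
        · exact absurd hu.1 (fun h => hABd _ h hBd)
      · exact ⟨hmA u w hadj hue hnf hu.1, hmC u w hadj hug hnf hu.2⟩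
    exact not_connected_of_cut hclosed (x := f1) (y := f2) ⟨hAf1, hCf1⟩
      (fun h => hABd f2 h.1 hBf2) hcf
end

section
/- The semidirect product F_n ⋊ ℤ/2, where ℤ/2 acts by inverting each free generator, is isomorphic to the free product of n+1 copies of ℤ/2. -/
/-- The involution `ι` of the free group inverting each generator. -/
def invAut (α : Type) : MulAut (FreeGroup α) :=
  MonoidHom.toMulEquiv
    (FreeGroup.lift fun i => (FreeGroup.of i)⁻¹)
    (FreeGroup.lift fun i => (FreeGroup.of i)⁻¹)
    (by ext i; simp) (by ext i; simp)

theorem invAut_sq (α : Type) : invAut α ^ 2 = 1 := by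
  rw [pow_two]; ext x; exact (invAut α).symm_apply_apply x

/-- The action of `ℤ/2` on the free group `Fₙ`, the generator acting by the
inverting involution `ι`. -/
def iotaAction (n : ℕ) : Multiplicative (ZMod 2) →* MulAut (FreeGroup (Fin n)) where
  toFun x := invAut (Fin n) ^ (x.toAdd.val)
  map_one' := by simp
  map_mul' a b := by
    show invAut (Fin n) ^ ((a.toAdd + b.toAdd).val) = _
    rw [ZMod.val_add, ← pow_eq_pow_mod _ (invAut_sq (Fin n)), pow_add]

/-!
Let `s` be the generator of `ℤ/2`. Conjugation by `s` inverts each `xᵢ`, so the elements `xᵢ s`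
and `s` are involutions; conversely, in the free product on involutions `t₀, …, tₙ`, conjugation by
`tₙ` inverts each `tᵢ tₙ`. Hence `xᵢ ↦ tᵢ tₙ, s ↦ tₙ` and `tᵢ ↦ xᵢ s, tₙ ↦ s` define homomorphisms
in both directions, and they are mutually inverse because `xᵢ = (xᵢ s) s`.
-/

open Multiplicative

theorem ofAdd_one_mul_self_zmod_two : (ofAdd 1 : Multiplicative (ZMod 2)) * ofAdd 1 = 1 := rfl

section CyclicHom

variable {M : Type*} [Monoid M] {n : ℕ} [NeZero n]

theorem MonoidHom.ext_mzmod {f g : Multiplicative (ZMod n) →* M}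
    (h : f (ofAdd 1) = g (ofAdd 1)) : f = g := by
  refine MonoidHom.ext fun x => ?_
  have hx : x = ofAdd 1 ^ x.toAdd.val := by
    rw [← ofAdd_nsmul, nsmul_one, ZMod.natCast_zmod_val, ofAdd_toAdd]
  rw [hx, map_pow, map_pow, h]

def zmodPowHom (g : M) (hg : g ^ n = 1) : Multiplicative (ZMod n) →* M where
  toFun x := g ^ x.toAdd.val
  map_one' := by simp
  map_mul' a b := by
    rw [toAdd_mul, ZMod.val_add, ← pow_eq_pow_mod _ hg, pow_add]

@[simp]
theorem zmodPowHom_ofAdd_one (g : M) (hg : g ^ n = 1) : zmodPowHom g hg (ofAdd 1) = g := by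
  rw [zmodPowHom, MonoidHom.coe_mk, OneHom.coe_mk, toAdd_ofAdd, ZMod.val_one_eq_one_mod,
    ← pow_eq_pow_mod 1 hg, pow_one]

end CyclicHom

theorem SemidirectProduct.inl_mul_inr_sq_eq_one {N G : Type*} [Group N] [Group G]
    {φ : G →* MulAut N} {x : N} {t : G} (ht : t ^ 2 = 1) (hx : φ t x = x⁻¹) :
    (inl x * inr t : N ⋊[φ] G) ^ 2 = 1 := by
  rw [pow_two]
  ext
  · simp [hx]
  · simpa [pow_two] using ht

theorem invAut_of {α : Type} (a : α) : invAut α (FreeGroup.of a) = (FreeGroup.of a)⁻¹ := by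
  simp [invAut]

theorem iotaAction_ofAdd_one (n : ℕ) : iotaAction n (ofAdd 1) = invAut (Fin n) :=
  pow_one _

open SemidirectProduct Monoid

section FreeProductOfInvolutions

variable (n : ℕ)

def coprodGen (i : Fin (n + 1)) : CoprodI (fun _ : Fin (n + 1) => Multiplicative (ZMod 2)) :=
  CoprodI.of (i := i) (ofAdd 1)

theorem coprodGen_mul_self (i : Fin (n + 1)) : coprodGen n i * coprodGen n i = 1 := by
  rw [coprodGen, ← map_mul, ofAdd_one_mul_self_zmod_two, map_one]

theorem coprodGen_inv (i : Fin (n + 1)) : (coprodGen n i)⁻¹ = coprodGen n i :=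
  inv_eq_of_mul_eq_one_right (coprodGen_mul_self n i)

def toCoprodI : FreeGroup (Fin n) ⋊[iotaAction n] Multiplicative (ZMod 2) →*
    CoprodI (fun _ : Fin (n + 1) => Multiplicative (ZMod 2)) :=
  SemidirectProduct.lift (FreeGroup.lift fun j => coprodGen n j.castSucc * coprodGen n (.last n))
    (CoprodI.of (M := fun _ : Fin (n + 1) => Multiplicative (ZMod 2)) (i := Fin.last n)) <| by
      intro g
      obtain rfl | rfl : g = 1 ∨ g = ofAdd 1 := by revert g; decide
      · ext; simp
      · refine FreeGroup.ext_hom _ _ fun j => ?_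
        simp only [MonoidHom.comp_apply, MulEquiv.coe_toMonoidHom, MulAut.conj_apply,
          iotaAction_ofAdd_one, invAut_of, map_inv, FreeGroup.lift_apply_of]
        change _ = coprodGen n (.last n) * _ * (coprodGen n (.last n))⁻¹
        rw [mul_inv_rev, coprodGen_inv, coprodGen_inv, mul_assoc, mul_assoc, coprodGen_mul_self,
          mul_one]

theorem toCoprodI_inl_of (j : Fin n) :
    toCoprodI n (inl (.of j)) = coprodGen n j.castSucc * coprodGen n (.last n) := by
  simp [toCoprodI]

theorem toCoprodI_inr_ofAdd_one : toCoprodI n (inr (ofAdd 1)) = coprodGen n (.last n) := by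
  simp [toCoprodI, coprodGen]

def ofCoprodI : CoprodI (fun _ : Fin (n + 1) => Multiplicative (ZMod 2)) →*
    FreeGroup (Fin n) ⋊[iotaAction n] Multiplicative (ZMod 2) :=
  CoprodI.lift <| Fin.lastCases inr fun j =>
    zmodPowHom (inl (.of j) * inr (ofAdd 1))
      (inl_mul_inr_sq_eq_one rfl (by rw [iotaAction_ofAdd_one, invAut_of]))

theorem ofCoprodI_coprodGen_last : ofCoprodI n (coprodGen n (.last n)) = inr (ofAdd 1) := by
  simp [ofCoprodI, coprodGen]

theorem ofCoprodI_coprodGen_castSucc (j : Fin n) :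
    ofCoprodI n (coprodGen n j.castSucc) = inl (.of j) * inr (ofAdd 1) := by
  simp [ofCoprodI, coprodGen]

theorem ofCoprodI_comp_toCoprodI : (ofCoprodI n).comp (toCoprodI n) = MonoidHom.id _ := by
  refine hom_ext (FreeGroup.ext_hom _ _ fun j => ?_) (MonoidHom.ext_mzmod ?_)
  · change ofCoprodI n (toCoprodI n (inl (.of j))) = inl (.of j)
    rw [toCoprodI_inl_of, map_mul, ofCoprodI_coprodGen_castSucc, ofCoprodI_coprodGen_last,
      mul_assoc, ← map_mul, ofAdd_one_mul_self_zmod_two, map_one, mul_one]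
  · change ofCoprodI n (toCoprodI n (inr (ofAdd 1))) = inr (ofAdd 1)
    rw [toCoprodI_inr_ofAdd_one, ofCoprodI_coprodGen_last]

theorem toCoprodI_comp_ofCoprodI : (toCoprodI n).comp (ofCoprodI n) = MonoidHom.id _ := by
  refine CoprodI.ext_hom _ _ fun i => MonoidHom.ext_mzmod ?_
  change toCoprodI n (ofCoprodI n (coprodGen n i)) = coprodGen n i
  induction i using Fin.lastCases with
  | last => rw [ofCoprodI_coprodGen_last, toCoprodI_inr_ofAdd_one]
  | cast j =>
    rw [ofCoprodI_coprodGen_castSucc, map_mul, toCoprodI_inl_of, toCoprodI_inr_ofAdd_one,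
      mul_assoc, coprodGen_mul_self, mul_one]

def semidirectEquivCoprodI : FreeGroup (Fin n) ⋊[iotaAction n] Multiplicative (ZMod 2) ≃*
    CoprodI (fun _ : Fin (n + 1) => Multiplicative (ZMod 2)) :=
  (toCoprodI n).toMulEquiv (ofCoprodI n) (ofCoprodI_comp_toCoprodI n) (toCoprodI_comp_ofCoprodI n)

end FreeProductOfInvolutions

/-- The semidirect product `Fₙ ⋊ ℤ/2`, where `ℤ/2` acts by
inverting each free generator, is isomorphic to the free product of `n + 1`
copies of `ℤ/2`. -/
theorem semidirect_iso_free_product_of_involutions (n : ℕ) :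
    Nonempty
      (SemidirectProduct (FreeGroup (Fin n)) (Multiplicative (ZMod 2)) (iotaAction n) ≃*
        Monoid.CoprodI (fun _ : Fin (n + 1) => Multiplicative (ZMod 2))) :=
  ⟨semidirectEquivCoprodI n⟩
end

section
/- The subgroup of even-length words on the generators x_1ι, …, x_nι, ι of the free product (ℤ/2)^{*(n+1)} ≅ F_n ⋊ ℤ/2 equals F_n, and is a characteristic subgroup of F_n ⋊ ℤ/2. -/
open FreeGroup in
lemma aux_freeGroup_eq_one_of_sq {α : Type} [DecidableEq α] {w : FreeGroup α}
    (h : w * w = 1) : w = 1 := by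
  by_contra hw
  have hLred : reduce w.toWord = w.toWord := w.reduce_toWord
  have hLne : w.toWord ≠ [] := fun h' => hw (toWord_eq_nil_iff.mp h')
  have hinv : invRev w.toWord = w.toWord := by
    rw [← toWord_inv, inv_eq_of_mul_eq_one_right h]
  set L := w.toWord with hLdef
  rcases Nat.even_or_odd L.length with ⟨m, hm⟩ | ⟨m, hm⟩
  · -- even: L.length = m + m, m ≥ 1
    have hm1 : 1 ≤ m := by
      rcases Nat.eq_zero_or_pos m with h0 | h1
      · exact absurd (List.eq_nil_of_length_eq_zero (by omega)) hLne
      · exact h1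
    have hmlt : m < L.length := by omega
    have hm1lt : m - 1 < L.length := by omega
    have e1 : L[m]? = some ((L[m-1]'hm1lt).1, !(L[m-1]'hm1lt).2) := by
      conv_lhs => rw [← hinv]
      rw [invRev, List.getElem?_reverse (by simpa using hmlt)]
      rw [List.getElem?_map, List.length_map]
      have hidx : L.length - 1 - m = m - 1 := by omega
      rw [hidx, List.getElem?_eq_getElem hm1lt]
      rfl
    rw [List.getElem?_eq_getElem hmlt, Option.some_inj] at e1
    have d1 : L.drop (m-1) = L[m-1]'hm1lt :: L[m]'hmlt :: L.drop (m+1) := by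
      rw [List.drop_eq_getElem_cons hm1lt]
      have : m - 1 + 1 = m := by omega
      rw [this, List.drop_eq_getElem_cons hmlt]
    have hstep : Red.Step L (L.take (m-1) ++ L.drop (m+1)) := by
      conv_lhs => rw [← List.take_append_drop (m-1) L, d1, e1]
      exact Red.Step.not
    have hlen2 : (reduce (L.take (m-1) ++ L.drop (m+1))).length ≤
        (L.take (m-1) ++ L.drop (m+1)).length := Red.length_le reduce.red
    rw [← reduce.Step.eq hstep, hLred] at hlen2
    simp only [List.length_append, List.length_take, List.length_drop] at hlen2
    omega
  · -- odd: L.length = 2 * m + 1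
    have hmlt : m < L.length := by omega
    have e1 : L[m]? = some ((L[m]'hmlt).1, !(L[m]'hmlt).2) := by
      conv_lhs => rw [← hinv]
      rw [invRev, List.getElem?_reverse (by simpa using hmlt)]
      rw [List.getElem?_map, List.length_map]
      have hidx : L.length - 1 - m = m := by omega
      rw [hidx, List.getElem?_eq_getElem hmlt]
      rfl
    rw [List.getElem?_eq_getElem hmlt, Option.some_inj] at e1
    have := congrArg Prod.snd e1
    simp at this



open SemidirectProduct Multiplicative Subgroup

local notation "GG" n => SemidirectProduct (FreeGroup (Fin n)) (Multiplicative (ZMod 2)) (iotaAction n)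

lemma aux_iota_of (n : ℕ) (i : Fin n) :
    iotaAction n (ofAdd (1 : ZMod 2)) (FreeGroup.of i) = (FreeGroup.of i)⁻¹ := by
  show (invAut (Fin n) ^ ((ofAdd (1 : ZMod 2)).toAdd.val)) (FreeGroup.of i) = _
  have : (ofAdd (1 : ZMod 2)).toAdd.val = 1 := rfl
  rw [this, pow_one]
  show FreeGroup.lift (fun i => (FreeGroup.of i)⁻¹) (FreeGroup.of i) = _
  simp

lemma aux_iota_sq : ofAdd (1 : ZMod 2) * ofAdd (1 : ZMod 2) = 1 := by decide

lemma aux_t_sq (n : ℕ) :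
    (inr (ofAdd (1 : ZMod 2)) : GG n) * inr (ofAdd (1 : ZMod 2)) = 1 := by
  rw [← map_mul, aux_iota_sq, map_one]

lemma aux_t_ne_one (n : ℕ) : (inr (ofAdd (1 : ZMod 2)) : GG n) ≠ 1 := by
  intro h
  have := congrArg SemidirectProduct.right h
  simp at this

lemma aux_s_sq (n : ℕ) (i : Fin n) :
    ((inl (FreeGroup.of i) * inr (ofAdd (1 : ZMod 2))) : GG n) *
      (inl (FreeGroup.of i) * inr (ofAdd (1 : ZMod 2))) = 1 := by
  have key : (inr (ofAdd (1 : ZMod 2)) : GG n) * inl (FreeGroup.of i) =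
      inl ((FreeGroup.of i)⁻¹) * inr (ofAdd (1 : ZMod 2)) := by
    rw [← aux_iota_of n i, inl_aut]
    have : (ofAdd (1 : ZMod 2))⁻¹ = ofAdd (1 : ZMod 2) := by decide
    rw [this, mul_assoc, mul_assoc, aux_t_sq n, mul_one]
  calc (inl (FreeGroup.of i) * inr (ofAdd (1 : ZMod 2)) : GG n) *
        (inl (FreeGroup.of i) * inr (ofAdd (1 : ZMod 2)))
      = inl (FreeGroup.of i) * ((inr (ofAdd (1 : ZMod 2)) * inl (FreeGroup.of i)) *
          inr (ofAdd (1 : ZMod 2))) := by group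
    _ = inl (FreeGroup.of i) * (inl ((FreeGroup.of i)⁻¹) *
          (inr (ofAdd (1 : ZMod 2)) * inr (ofAdd (1 : ZMod 2)))) := by rw [key]; group
    _ = 1 := by rw [aux_t_sq n, mul_one, ← map_mul]; simp

lemma aux_s_ne_one (n : ℕ) (i : Fin n) :
    ((inl (FreeGroup.of i) * inr (ofAdd (1 : ZMod 2))) : GG n) ≠ 1 := by
  intro h
  have := congrArg SemidirectProduct.right h
  simp at this

lemma aux_s_mul_t (n : ℕ) (i : Fin n) :
    ((inl (FreeGroup.of i) * inr (ofAdd (1 : ZMod 2))) : GG n) * inr (ofAdd (1 : ZMod 2)) =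
      inl (FreeGroup.of i) := by
  rw [mul_assoc, aux_t_sq, mul_one]

/-- order-2 elements have nontrivial right component. -/
lemma aux_rightHom_of_invol (n : ℕ) {g : GG n} (hg : g * g = 1) (hne : g ≠ 1) :
    rightHom g = ofAdd (1 : ZMod 2) := by
  have hcases : ∀ b : Multiplicative (ZMod 2), b = 1 ∨ b = ofAdd 1 := by decide
  rcases hcases (rightHom g) with h1 | h1
  · exfalso
    have hker : g ∈ (inl : FreeGroup (Fin n) →* GG n).range := by
      rw [range_inl_eq_ker_rightHom]; exact h1
    obtain ⟨w, rfl⟩ := hker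
    rw [← map_mul] at hg
    have hw : w * w = 1 := inl_injective (by rw [hg, map_one])
    exact hne (by rw [aux_freeGroup_eq_one_of_sq hw, map_one])
  · exact h1

/-- The set of products of two involutions. -/
def auxT (n : ℕ) : Set (GG n) := {x | ∃ s t : GG n, s * s = 1 ∧ s ≠ 1 ∧ t * t = 1 ∧ t ≠ 1 ∧ x = s * t}

lemma aux_closure_T (n : ℕ) :
    closure (auxT n) = (inl : FreeGroup (Fin n) →* GG n).range := by
  apply le_antisymm
  · rw [closure_le, range_inl_eq_ker_rightHom]
    rintro x ⟨s, t, hs2, hs1, ht2, ht1, rfl⟩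
    show rightHom (s * t) = 1
    rw [map_mul, aux_rightHom_of_invol n hs2 hs1, aux_rightHom_of_invol n ht2 ht1, aux_iota_sq]
  · rw [MonoidHom.range_eq_map, ← FreeGroup.closure_range_of, MonoidHom.map_closure]
    apply closure_le _ |>.mpr
    rintro x ⟨y, ⟨i, rfl⟩, rfl⟩
    apply Subgroup.subset_closure
    exact ⟨inl (FreeGroup.of i) * inr (ofAdd 1), inr (ofAdd 1), aux_s_sq n i, aux_s_ne_one n i,
      aux_t_sq n, aux_t_ne_one n, (aux_s_mul_t n i).symm⟩

lemma aux_map_T (n : ℕ) (φ : MulAut (GG n)) : φ '' auxT n ⊆ auxT n := by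
  rintro x ⟨y, ⟨s, t, hs2, hs1, ht2, ht1, rfl⟩, rfl⟩
  refine ⟨φ s, φ t, ?_, ?_, ?_, ?_, map_mul _ _ _⟩
  · rw [← map_mul, hs2, map_one]
  · exact fun h => hs1 (by simpa using φ.injective (h.trans (map_one φ).symm))
  · rw [← map_mul, ht2, map_one]
  · exact fun h => ht1 (by simpa using φ.injective (h.trans (map_one φ).symm))

lemma aux_char (n : ℕ) (φ : MulAut (GG n)) :
    Subgroup.map φ.toMonoidHom (inl : FreeGroup (Fin n) →* GG n).range =
      (inl : FreeGroup (Fin n) →* GG n).range := by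
  have key : ∀ ψ : MulAut (GG n),
      Subgroup.map ψ.toMonoidHom (inl : FreeGroup (Fin n) →* GG n).range ≤
        (inl : FreeGroup (Fin n) →* GG n).range := by
    intro ψ
    rw [← aux_closure_T, MonoidHom.map_closure, closure_le]
    exact (aux_map_T n ψ).trans subset_closure
  refine le_antisymm (key φ) fun g hg => ?_
  exact ⟨(φ⁻¹ : MulAut (GG n)) g,
    key φ⁻¹ (Subgroup.mem_map.mpr ⟨g, hg, rfl⟩), MulAut.apply_inv_self _ φ g⟩

/-- In `G = Fₙ ⋊ ℤ/2 ≅ (ℤ/2)^{*(n+1)}`, with the `n + 1` involutive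
generators `x₁ι, …, xₙι, ι`, the subgroup of even-length words on these generators
(equivalently, the subgroup generated by all products of two of these generators)
equals the canonical copy of `Fₙ`, and this subgroup is characteristic in `G`
(invariant under every automorphism of `G`). -/
theorem even_words_eq_free_kernel_and_characteristic (n : ℕ) :
    Subgroup.closure
        {x : SemidirectProduct (FreeGroup (Fin n)) (Multiplicative (ZMod 2)) (iotaAction n) |
          ∃ s ∈ ({g | (∃ i : Fin n, g = SemidirectProduct.inl (FreeGroup.of i) *
                  SemidirectProduct.inr (Multiplicative.ofAdd (1 : ZMod 2))) ∨
                g = SemidirectProduct.inr (Multiplicative.ofAdd (1 : ZMod 2))} :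
              Set (SemidirectProduct (FreeGroup (Fin n)) (Multiplicative (ZMod 2)) (iotaAction n))),
          ∃ t ∈ ({g | (∃ i : Fin n, g = SemidirectProduct.inl (FreeGroup.of i) *
                  SemidirectProduct.inr (Multiplicative.ofAdd (1 : ZMod 2))) ∨
                g = SemidirectProduct.inr (Multiplicative.ofAdd (1 : ZMod 2))} :
              Set (SemidirectProduct (FreeGroup (Fin n)) (Multiplicative (ZMod 2)) (iotaAction n))),
          x = s * t} =
      (SemidirectProduct.inl : FreeGroup (Fin n) →*
        SemidirectProduct (FreeGroup (Fin n)) (Multiplicative (ZMod 2)) (iotaAction n)).range ∧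
    ∀ φ : MulAut (SemidirectProduct (FreeGroup (Fin n)) (Multiplicative (ZMod 2)) (iotaAction n)),
      Subgroup.map φ.toMonoidHom
          (SemidirectProduct.inl : FreeGroup (Fin n) →*
            SemidirectProduct (FreeGroup (Fin n)) (Multiplicative (ZMod 2)) (iotaAction n)).range =
        (SemidirectProduct.inl : FreeGroup (Fin n) →*
          SemidirectProduct (FreeGroup (Fin n)) (Multiplicative (ZMod 2)) (iotaAction n)).range := by
  constructor
  · apply le_antisymm
    · rw [Subgroup.closure_le, SemidirectProduct.range_inl_eq_ker_rightHom]
      rintro x ⟨s, hs, t, ht, rfl⟩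
      have hr : ∀ g ∈ ({g | (∃ i : Fin n, g = SemidirectProduct.inl (FreeGroup.of i) *
                  SemidirectProduct.inr (Multiplicative.ofAdd (1 : ZMod 2))) ∨
                g = SemidirectProduct.inr (Multiplicative.ofAdd (1 : ZMod 2))} :
              Set (SemidirectProduct (FreeGroup (Fin n)) (Multiplicative (ZMod 2))
                (iotaAction n))),
          rightHom g = ofAdd (1 : ZMod 2) := by
        rintro g (⟨i, rfl⟩ | rfl)
        · rw [map_mul, rightHom_inl, rightHom_inr, one_mul]
        · rw [rightHom_inr]
      show rightHom (s * t) = 1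
      rw [map_mul, hr s hs, hr t ht, aux_iota_sq]
    · rw [MonoidHom.range_eq_map, ← FreeGroup.closure_range_of, MonoidHom.map_closure,
        Subgroup.closure_le]
      rintro x ⟨y, ⟨i, rfl⟩, rfl⟩
      apply Subgroup.subset_closure
      exact ⟨_, Or.inl ⟨i, rfl⟩, _, Or.inr rfl, (aux_s_mul_t n i).symm⟩
  · exact aux_char n
end

section
/- The image of the group HM_n(ℤ) under mod-2 reduction GL_n(ℤ) → GL_n(ℤ/2) is isomorphic to the symmetric group S_{n+1}, realized as the group of permutations of the set V = {e_1, …, e_n, e_1 + ⋯ + e_n} ⊂ (ℤ/2)ⁿ. -/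
/-- The set of permutation matrices in `GL_n(ℤ)`. -/
def permMatrices (n : ℕ) : Set (Matrix.GeneralLinearGroup (Fin n) ℤ) :=
  {g | ∃ σ : Equiv.Perm (Fin n), ∀ i j : Fin n,
    (g : Matrix (Fin n) (Fin n) ℤ) i j = if σ j = i then 1 else 0}

/-- The matrix `T`, acting on columns by `e₁ ↦ −e₁` and `eᵢ ↦ eᵢ − e₁` for `i ≠ 1`. -/
def Tmat (n : ℕ) : Matrix (Fin n) (Fin n) ℤ :=
  fun j k => if j = k then (if (k : ℕ) = 0 then -1 else 1)
    else if (j : ℕ) = 0 then -1 else 0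

/-- The mod-2 reduction homomorphism `GL_n(ℤ) → GL_n(ℤ/2)`. -/
def red (n : ℕ) : Matrix.GeneralLinearGroup (Fin n) ℤ →*
    Matrix.GeneralLinearGroup (Fin n) (ZMod 2) :=
  Matrix.GeneralLinearGroup.map (Int.castRingHom (ZMod 2))

/-- The subgroup `HM_n(ℤ) ≤ GL_n(ℤ)` generated by the principal level-2 congruence
subgroup `Γ_n[2]` (the kernel of mod-2 reduction), all permutation matrices, and the
matrix `T`. -/
def HM (n : ℕ) : Subgroup (Matrix.GeneralLinearGroup (Fin n) ℤ) :=
  Subgroup.closure (((MonoidHom.ker (red n) : Subgroup _) :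
      Set (Matrix.GeneralLinearGroup (Fin n) ℤ)) ∪
    permMatrices n ∪ {g | (g : Matrix (Fin n) (Fin n) ℤ) = Tmat n})

def PmatZ (n : ℕ) (σ : Equiv.Perm (Fin n)) : Matrix (Fin n) (Fin n) ℤ :=
  fun i j => if σ j = i then 1 else 0

lemma PmatZ_mul (n : ℕ) (σ τ : Equiv.Perm (Fin n)) :
    PmatZ n σ * PmatZ n τ = PmatZ n (σ * τ) := by
  funext i j
  rw [Matrix.mul_apply]
  simp only [PmatZ, mul_ite, mul_one, mul_zero]
  rw [Finset.sum_ite_eq Finset.univ (τ j) (fun k => if σ k = i then (1 : ℤ) else 0)]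
  simp only [Finset.mem_univ, if_true]
  rfl

lemma PmatZ_one (n : ℕ) : PmatZ n 1 = 1 := by
  funext i j
  simp [PmatZ, Matrix.one_apply, eq_comm]

def PGL (n : ℕ) (σ : Equiv.Perm (Fin n)) : Matrix.GeneralLinearGroup (Fin n) ℤ :=
  ⟨PmatZ n σ, PmatZ n σ⁻¹,
    by rw [PmatZ_mul, mul_inv_cancel, PmatZ_one],
    by rw [PmatZ_mul, inv_mul_cancel, PmatZ_one]⟩

lemma Tmat_mul_self (n : ℕ) : Tmat (n + 1) * Tmat (n + 1) = 1 := by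
  funext i j
  rw [Matrix.mul_apply, Fin.sum_univ_succ]
  rcases Fin.eq_zero_or_eq_succ i with rfl | ⟨i', rfl⟩ <;>
    rcases Fin.eq_zero_or_eq_succ j with rfl | ⟨j', rfl⟩
  · simp [Tmat, Matrix.one_apply, Fin.succ_ne_zero]
  · have : ∀ x : Fin n, (if (j' : Fin n) = x then (-1 : ℤ) else 0)
        = Tmat (n + 1) 0 x.succ * Tmat (n + 1) x.succ j'.succ := by
      intro x
      simp [Tmat, Fin.succ_inj, Fin.ext_iff, eq_comm]
    rw [← Finset.sum_congr rfl (fun x _ => this x),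
      Finset.sum_ite_eq Finset.univ j' (fun _ => (-1 : ℤ))]
    simp [Tmat, Matrix.one_apply, (Fin.succ_ne_zero j').symm]
  · simp [Tmat, Matrix.one_apply, Fin.ext_iff, Finset.sum_ite_eq, Fin.succ_ne_zero, eq_comm]
  · have : ∀ x : Fin n, (if (j' : Fin n) = x then (if i' = x then (1 : ℤ) else 0) else 0)
        = Tmat (n + 1) i'.succ x.succ * Tmat (n + 1) x.succ j'.succ := by
      intro x
      simp only [Tmat, Fin.succ_inj, Fin.val_succ, Nat.add_one_ne_zero, if_false]
      by_cases h1 : (i' : Fin n) = x <;> by_cases h2 : (j' : Fin n) = x <;>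
        simp [h1, h2, eq_comm, Fin.ext_iff]
    rw [← Finset.sum_congr rfl (fun x _ => this x)]
    rw [Finset.sum_ite_eq Finset.univ j' (fun x => if i' = x then (1 : ℤ) else 0)]
    simp [Tmat, Matrix.one_apply, Fin.ext_iff, Fin.succ_inj, eq_comm]

def TGL (n : ℕ) : Matrix.GeneralLinearGroup (Fin (n + 1)) ℤ :=
  ⟨Tmat (n + 1), Tmat (n + 1), Tmat_mul_self n, Tmat_mul_self n⟩

lemma red_coe (n : ℕ) (g : Matrix.GeneralLinearGroup (Fin n) ℤ) :
    ((red n g : Matrix.GeneralLinearGroup (Fin n) (ZMod 2)) : Matrix (Fin n) (Fin n) (ZMod 2))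
      = (g : Matrix (Fin n) (Fin n) ℤ).map (Int.cast : ℤ → ZMod 2) := rfl


/-- The vectors `v_0 = e_1 + ⋯ + e_n`, `v_{k+1} = e_{k+1}` in `(ZMod 2)^n`. -/
def vvec (n : ℕ) (k : Fin (n + 1)) (j : Fin n) : ZMod 2 :=
  if (k : ℕ) = 0 then 1 else if (k : ℕ) = (j : ℕ) + 1 then 1 else 0

lemma vvec_zero (n : ℕ) (j : Fin n) : vvec n 0 j = 1 := rfl

lemma vvec_succ (n : ℕ) (m j : Fin n) : vvec n m.succ j = if m = j then 1 else 0 := by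
  simp [vvec, Fin.ext_iff]

/-- The matrix of the permutation action of `σ` on `V` (row `i` is `v_{σ⁻¹(i+1)}`). -/
def Amat (n : ℕ) (σ : Equiv.Perm (Fin (n + 1))) : Matrix (Fin n) (Fin n) (ZMod 2) :=
  fun i j => vvec n (σ⁻¹ i.succ) j

lemma sum_vvec (n : ℕ) (j : Fin n) : ∑ m : Fin (n + 1), vvec n m j = 0 := by
  rw [Fin.sum_univ_succ]
  have : ∑ k : Fin n, vvec n k.succ j = 1 := by
    simp only [vvec_succ]
    rw [Finset.sum_ite_eq' (Finset.univ) j (fun _ => (1 : ZMod 2))]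
    simp
  rw [this, vvec_zero]
  decide

lemma key_sum (n : ℕ) (τ : Equiv.Perm (Fin (n + 1))) (t : Fin (n + 1)) (j : Fin n) :
    ∑ k : Fin n, vvec n t k * vvec n (τ k.succ) j = vvec n (τ t) j := by
  induction t using Fin.cases with
  | zero =>
    simp only [vvec_zero, one_mul]
    have h1 : ∑ m : Fin (n + 1), vvec n (τ m) j = 0 := by
      rw [Equiv.sum_comp τ (fun m => vvec n m j)]
      exact sum_vvec n j
    rw [Fin.sum_univ_succ] at h1
    have : ∀ a b : ZMod 2, a + b = 0 → b = a := by decide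
    exact this _ _ h1
  | succ m =>
    simp only [vvec_succ]
    rw [Finset.sum_congr rfl (fun k _ => ite_mul (α := ZMod 2) _ _ _ _), ]
    simp only [one_mul, zero_mul]
    rw [Finset.sum_ite_eq (Finset.univ) m (fun k => vvec n (τ k.succ) j)]
    simp

lemma Amat_mul (n : ℕ) (σ τ : Equiv.Perm (Fin (n + 1))) :
    Amat n (σ * τ) = Amat n σ * Amat n τ := by
  funext i j
  rw [Matrix.mul_apply]
  simp only [Amat]
  rw [key_sum n τ⁻¹ (σ⁻¹ i.succ) j]
  rfl

lemma Amat_one (n : ℕ) : Amat n 1 = 1 := by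
  funext i j
  simp [Amat, vvec_succ, Matrix.one_apply, eq_comm]

/-- `φ : S_{n+1} →* GL_n(ZMod 2)`, the permutation action on `V`. -/
def phi (n : ℕ) : Equiv.Perm (Fin (n + 1)) →* Matrix.GeneralLinearGroup (Fin n) (ZMod 2) where
  toFun σ := ⟨Amat n σ, Amat n σ⁻¹,
    by rw [← Amat_mul, mul_inv_cancel, Amat_one],
    by rw [← Amat_mul, inv_mul_cancel, Amat_one]⟩
  map_one' := Units.ext (Amat_one n)
  map_mul' σ τ := Units.ext (Amat_mul n σ τ)

lemma phi_coe (n : ℕ) (σ : Equiv.Perm (Fin (n + 1))) :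
    ((phi n σ : Matrix.GeneralLinearGroup (Fin n) (ZMod 2)) : Matrix (Fin n) (Fin n) (ZMod 2))
      = Amat n σ := rfl

lemma phi_injective (n : ℕ) (hn : 2 ≤ n) : Function.Injective (phi n) := by
  have h0 : 0 < n := by omega
  rw [injective_iff_map_eq_one]
  intro σ hσ
  have hA : Amat n σ = 1 := congrArg Units.val hσ
  have hfix : ∀ i : Fin n, σ⁻¹ i.succ = i.succ := by
    intro i
    have hrow : ∀ j, vvec n (σ⁻¹ i.succ) j = (1 : Matrix (Fin n) (Fin n) (ZMod 2)) i j :=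
      fun j => by rw [← hA]; rfl
    rcases Fin.eq_zero_or_eq_succ (σ⁻¹ i.succ) with h | ⟨m, hm⟩
    · exfalso
      obtain ⟨j, hj⟩ : ∃ j : Fin n, j ≠ i := by
        rcases Decidable.em (i = ⟨0, h0⟩) with h' | h'
        · exact ⟨⟨1, by omega⟩, by rw [h']; simp [Fin.ext_iff]⟩
        · exact ⟨⟨0, h0⟩, fun hc => h' hc.symm⟩
      have hv := hrow j
      rw [h, vvec_zero, Matrix.one_apply_ne (Ne.symm hj)] at hv
      exact one_ne_zero hv
    · have hv := hrow m
      rw [hm, vvec_succ, if_pos rfl] at hv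
      by_cases h : i = m
      · rw [hm, h]
      · rw [Matrix.one_apply_ne h] at hv
        exact absurd hv one_ne_zero
  have hfix0 : σ⁻¹ 0 = 0 := by
    rcases Fin.eq_zero_or_eq_succ (σ⁻¹ 0) with h | ⟨m, hm⟩
    · exact h
    · exfalso
      have h2 := hfix m
      have h3 : (0 : Fin (n + 1)) = m.succ := σ⁻¹.injective (hm.trans h2.symm)
      exact (Fin.succ_ne_zero m) h3.symm
  have hinv : σ⁻¹ = 1 := by
    apply Equiv.ext
    intro x
    rcases Fin.eq_zero_or_eq_succ x with rfl | ⟨m, rfl⟩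
    · simpa using hfix0
    · simpa using hfix m
  rw [← inv_inv σ, hinv, inv_one]

/-- Extension `S_n → S_{n+1}` fixing `0` and acting on successors. -/
def extFun (n : ℕ) (σ : Equiv.Perm (Fin n)) : Fin (n + 1) → Fin (n + 1) :=
  fun x => Fin.cases 0 (fun k => (σ k).succ) x

lemma extFun_comp (n : ℕ) (σ τ : Equiv.Perm (Fin n)) (x : Fin (n + 1)) :
    extFun n σ (extFun n τ x) = extFun n (σ * τ) x := by
  rcases Fin.eq_zero_or_eq_succ x with rfl | ⟨m, rfl⟩ <;> simp [extFun]

def extPerm (n : ℕ) : Equiv.Perm (Fin n) →* Equiv.Perm (Fin (n + 1)) where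
  toFun σ := ⟨extFun n σ, extFun n σ⁻¹,
    fun x => by rw [extFun_comp, inv_mul_cancel]; rcases Fin.eq_zero_or_eq_succ x with rfl | ⟨m, rfl⟩ <;> simp [extFun],
    fun x => by rw [extFun_comp, mul_inv_cancel]; rcases Fin.eq_zero_or_eq_succ x with rfl | ⟨m, rfl⟩ <;> simp [extFun]⟩
  map_one' := by
    apply Equiv.ext; intro x
    rcases Fin.eq_zero_or_eq_succ x with rfl | ⟨m, rfl⟩ <;> simp [extFun]
  map_mul' σ τ := by
    apply Equiv.ext; intro x
    exact (extFun_comp n σ τ x).symm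

lemma extPerm_zero (n : ℕ) (σ : Equiv.Perm (Fin n)) : extPerm n σ 0 = 0 := rfl

lemma extPerm_succ (n : ℕ) (σ : Equiv.Perm (Fin n)) (k : Fin n) :
    extPerm n σ k.succ = (σ k).succ := rfl

lemma extPerm_swap (n : ℕ) (a b : Fin n) :
    extPerm n (Equiv.swap a b) = Equiv.swap a.succ b.succ := by
  apply Equiv.ext; intro x
  rcases Fin.eq_zero_or_eq_succ x with rfl | ⟨m, rfl⟩
  · rw [extPerm_zero, Equiv.swap_apply_of_ne_of_ne (Fin.succ_ne_zero a).symm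
      (Fin.succ_ne_zero b).symm]
  · rw [extPerm_succ, Equiv.swap_apply_def, Equiv.swap_apply_def]
    simp only [Fin.succ_inj]
    split_ifs <;> rfl

/-- Generation of `S_{n+1}` by the extended `S_n` and the swap `(0, 1)`. -/
lemma gen_top (n : ℕ) (hn : 1 ≤ n) :
    Subgroup.closure (Set.range (extPerm n) ∪ {Equiv.swap (0 : Fin (n + 1)) (⟨0, hn⟩ : Fin n).succ}) = ⊤ := by
  set τ := Equiv.swap (0 : Fin (n + 1)) (⟨0, hn⟩ : Fin n).succ with hτ
  rw [eq_top_iff, ← Equiv.Perm.closure_isSwap, Subgroup.closure_le]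
  rintro x ⟨a, b, hab, rfl⟩
  set H := Subgroup.closure (Set.range (extPerm n) ∪ {τ})
  have hextmem : ∀ σ : Equiv.Perm (Fin n), extPerm n σ ∈ H :=
    fun σ => Subgroup.subset_closure (Or.inl ⟨σ, rfl⟩)
  have hτmem : τ ∈ H := Subgroup.subset_closure (Or.inr rfl)
  have hswap0 : ∀ b' : Fin n, Equiv.swap (0 : Fin (n + 1)) b'.succ ∈ H := by
    intro b'
    have key : Equiv.swap (0 : Fin (n + 1)) b'.succ
        = extPerm n (Equiv.swap (⟨0, hn⟩ : Fin n) b') * τ * (extPerm n (Equiv.swap (⟨0, hn⟩ : Fin n) b'))⁻¹ := by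
      rw [hτ, ← Equiv.swap_apply_apply, extPerm_succ, Equiv.swap_apply_left, extPerm_zero]
    rw [key]
    exact mul_mem (mul_mem (hextmem _) hτmem) (inv_mem (hextmem _))
  rcases Fin.eq_zero_or_eq_succ a with rfl | ⟨a', rfl⟩
  · rcases Fin.eq_zero_or_eq_succ b with rfl | ⟨b', rfl⟩
    · exact absurd rfl hab
    · exact hswap0 b'
  · rcases Fin.eq_zero_or_eq_succ b with rfl | ⟨b', rfl⟩
    · rw [Equiv.swap_comm]; exact hswap0 a'
    · rw [← extPerm_swap]; exact hextmem _

lemma red_PGL (n : ℕ) (σ : Equiv.Perm (Fin n)) :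
    red n (PGL n σ) = phi n (extPerm n σ) := by
  apply Units.ext
  rw [red_coe]
  funext i j
  rw [phi_coe]
  show ((if σ j = i then (1 : ℤ) else 0 : ℤ) : ZMod 2) = Amat n (extPerm n σ) i j
  have h1 : (extPerm n σ)⁻¹ = extPerm n σ⁻¹ := (map_inv (extPerm n) σ).symm
  rw [Amat, h1, extPerm_succ, vvec_succ]
  by_cases h : σ j = i
  · rw [if_pos h, if_pos (by rw [← h]; simp), Int.cast_one]
  · rw [if_neg h, if_neg (fun hc => h (by rw [← hc]; simp)), Int.cast_zero]

lemma neg_one_zmod2 : ((-1 : ℤ) : ZMod 2) = 1 := by decide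

lemma red_TGL (n : ℕ) (hn : 1 ≤ n + 1) :
    red (n + 1) (TGL n) = phi (n + 1) (Equiv.swap (0 : Fin (n + 2)) (⟨0, hn⟩ : Fin (n + 1)).succ) := by
  apply Units.ext
  rw [red_coe]
  funext i j
  rw [phi_coe]
  set τ := Equiv.swap (0 : Fin (n + 2)) (⟨0, hn⟩ : Fin (n + 1)).succ with hτ
  have hτinv : τ⁻¹ = τ := Equiv.swap_inv _ _
  rw [Amat, hτinv]
  show ((Tmat (n + 1) i j : ℤ) : ZMod 2) = vvec (n + 1) (τ i.succ) j
  by_cases hi : i = (⟨0, hn⟩ : Fin (n + 1))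
  · subst hi
    rw [hτ, Equiv.swap_apply_right, vvec_zero]
    simp only [Tmat]
    split_ifs <;> first | exact neg_one_zmod2 | exact Int.cast_one
  · have hne0 : (i : ℕ) ≠ 0 := fun hc => hi (Fin.ext hc)
    have hfix : τ i.succ = i.succ := by
      rw [hτ]
      apply Equiv.swap_apply_of_ne_of_ne (Fin.succ_ne_zero i)
      rw [Ne, Fin.succ_inj]
      exact hi
    rw [hfix, vvec_succ]
    simp only [Tmat, hne0, if_false]
    by_cases h : i = j
    · rw [if_pos h, if_neg (fun hc => hne0 (by rw [h]; exact hc)), Int.cast_one, if_pos h]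
    · rw [if_neg h, Int.cast_zero, if_neg h]

/-- The image of `HM_n(ℤ)` under mod-2 reduction
`GL_n(ℤ) → GL_n(ℤ/2)` is isomorphic to the symmetric group `S_{n+1}` (realized as the
group of permutations of the `n + 1` vectors `e₁, …, eₙ, e₁ + ⋯ + eₙ` of `(ℤ/2)ⁿ`). -/
theorem HM_mod_two_image_iso_symm (n : ℕ) (hn : 2 ≤ n) :
    Nonempty (↥(Subgroup.map (red n) (HM n)) ≃* Equiv.Perm (Fin (n + 1))) := by

  obtain ⟨m, rfl⟩ : ∃ m, n = m + 1 := ⟨n - 1, by omega⟩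
  have h1 : 1 ≤ m + 1 := by omega
  set τ := Equiv.swap (0 : Fin (m + 2)) (⟨0, h1⟩ : Fin (m + 1)).succ with hτ
  set S := (((MonoidHom.ker (red (m + 1)) : Subgroup _) :
      Set (Matrix.GeneralLinearGroup (Fin (m + 1)) ℤ)) ∪
    permMatrices (m + 1) ∪
      {g | (g : Matrix (Fin (m + 1)) (Fin (m + 1)) ℤ) = Tmat (m + 1)}) with hS
  have heq : Subgroup.map (red (m + 1)) (HM (m + 1)) = (phi (m + 1)).range := by
    rw [HM, ← hS, MonoidHom.map_closure]
    apply le_antisymm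
    · rw [Subgroup.closure_le]
      rintro x ⟨g, hg, rfl⟩
      rcases hg with (hg | hg) | hg
      · exact ⟨1, by rw [map_one]; exact (MonoidHom.mem_ker.mp hg).symm⟩
      · obtain ⟨σ, hσ⟩ := hg
        have hg' : g = PGL (m + 1) σ := Units.ext (funext fun i => funext fun j => hσ i j)
        exact ⟨extPerm (m + 1) σ, by rw [hg', red_PGL]⟩
      · have hg' : g = TGL m := Units.ext hg
        exact ⟨τ, by rw [hg', hτ, red_TGL]⟩
    · have htop : (⊤ : Subgroup (Equiv.Perm (Fin (m + 2)))) ≤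
          Subgroup.comap (phi (m + 1)) (Subgroup.closure ((red (m + 1)) '' S)) := by
        rw [← gen_top (m + 1) h1, Subgroup.closure_le]
        rintro x hx
        rcases hx with ⟨σ, rfl⟩ | hx
        · refine Subgroup.mem_comap.mpr (Subgroup.subset_closure ?_)
          exact ⟨PGL (m + 1) σ, Or.inl (Or.inr ⟨σ, fun i j => rfl⟩), red_PGL _ σ⟩
        · have hxτ : x = τ := hx
          subst hxτ
          refine Subgroup.mem_comap.mpr (Subgroup.subset_closure ?_)
          exact ⟨TGL m, Or.inr rfl, red_TGL m h1⟩
      rintro x ⟨σ, rfl⟩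
      exact htop (Subgroup.mem_top σ)
  have hinj := phi_injective (m + 1) hn
  exact ⟨(MulEquiv.subgroupCongr heq).trans (MonoidHom.ofInjective hinj).symm⟩
end
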